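/- arXiv:2403.10738 — 9 statements merged into one kernel-verified Lean document; each statement's English description precedes it below -/
import Mathlib

section
/- Let d ≥ 1 and let Φ be a nonempty compact convex subset of ℝ^d. Define Φ* = { ψ ∈ ℝ^d : ⟨φ, ψ⟩ ≥ 0 for all φ ∈ Φ }. Then there exists a single point φ̄ ∈ Φ such that for every ψ ∈ Φ*, ⟨φ̄, ψ⟩ ≥ (1/(2d)) · max_{φ ∈ Φ} ⟨φ, ψ⟩. -/
/-!
Apply Helly's theorem to the shrunken copies `c • x + (1 - c) • Φ`, `x ∈ Φ`, with `c = 1/(2d)`: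
any `d + 1` of them contain the centroid of their centres, since `c ≤ 1/(d + 1)`. A common point
`φbar` then has the form `c • φ + (1 - c) • y` with `y ∈ Φ` for every `φ ∈ Φ`, and
`⟪y, ψ⟫ ≥ 0` for `ψ ∈ Φ*` gives `⟪φbar, ψ⟫ ≥ c ⟪φ, ψ⟫`.
-/

open scoped RealInnerProductSpace

open Finset Module

lemma Convex.exists_smul_add_smul_eq_centroid {ι E : Type*} [AddCommGroup E] [Module ℝ E]
    {s : Set E} (hs : Convex ℝ s) {I : Finset ι} {z : ι → E} (hz : ∀ j ∈ I, z j ∈ s) {c : ℝ}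
    (hc1 : c < 1) (hcI : c * #I ≤ 1) {i : ι} (hi : i ∈ I) :
    ∃ y ∈ s, c • z i + (1 - c) • y = (#I : ℝ)⁻¹ • ∑ j ∈ I, z j := by
  classical
  have hk : (0 : ℝ) < #I := by exact_mod_cast card_pos.2 ⟨i, hi⟩
  have hc1' : 0 < 1 - c := sub_pos.2 hc1
  -- Taking weight `c` off `z i` in the centroid leaves nonnegative weights `t`, as `c * #I ≤ 1`.
  set t : ι → ℝ := fun j ↦ (#I : ℝ)⁻¹ - if j = i then c else 0
  have ht_sum : ∑ j ∈ I, t j = 1 - c := by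
    simp [t, sum_sub_distrib, sum_ite_eq', hi, hk.ne']
  refine ⟨∑ j ∈ I, ((1 - c)⁻¹ * t j) • z j, hs.sum_mem (fun j _ ↦ ?_) ?_ hz, ?_⟩
  · refine mul_nonneg (inv_nonneg.2 hc1'.le) (sub_nonneg.2 ?_)
    split_ifs
    · rwa [← one_div, le_div_iff₀ hk]
    · positivity
  · rw [← mul_sum, ht_sum, inv_mul_cancel₀ hc1'.ne']
  · simp_rw [smul_sum, smul_smul, ← mul_assoc, mul_inv_cancel₀ hc1'.ne', one_mul, t, sub_smul,
      sum_sub_distrib, ite_smul, zero_smul, sum_ite_eq', if_pos hi]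
    abel

lemma Convex.exists_mem_forall_exists_smul_add_smul_eq {E : Type*} [NormedAddCommGroup E]
    [NormedSpace ℝ E] [FiniteDimensional ℝ E] {s : Set E} (hs : Convex ℝ s) (hsc : IsCompact s)
    (hne : s.Nonempty) {c : ℝ} (hc0 : 0 ≤ c) (hc1 : c < 1) (hcE : c * (finrank ℝ E + 1) ≤ 1) :
    ∃ p ∈ s, ∀ x ∈ s, ∃ y ∈ s, c • x + (1 - c) • y = p := by
  let F : s → Set E := fun x ↦ (fun y ↦ c • (x : E) + (1 - c) • y) '' s
  obtain ⟨p, hp⟩ : (⋂ x, F x).Nonempty := by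
    refine helly_theorem_compact' (𝕜 := ℝ) (fun x ↦ hs.affinity _ _)
      (fun x ↦ hsc.image (by fun_prop)) fun I hI ↦ ?_
    refine ⟨(#I : ℝ)⁻¹ • ∑ j ∈ I, (j : E), Set.mem_iInter₂.2 fun x hx ↦ ?_⟩
    have hcI : c * #I ≤ 1 :=
      le_trans (mul_le_mul_of_nonneg_left (by exact_mod_cast hI) hc0) hcE
    exact hs.exists_smul_add_smul_eq_centroid (fun j _ ↦ j.2) hc1 hcI hx
  have hpF : ∀ x ∈ s, ∃ y ∈ s, c • x + (1 - c) • y = p := fun x hx ↦ Set.mem_iInter.1 hp ⟨x, hx⟩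
  obtain ⟨x₀, hx₀⟩ := hne
  obtain ⟨y₀, hy₀, rfl⟩ := hpF x₀ hx₀
  exact ⟨_, hs hx₀ hy₀ hc0 (sub_nonneg.2 hc1.le) (add_sub_cancel _ _), hpF⟩

lemma one_div_two_mul_lt_one (d : ℕ) : 1 / (2 * d : ℝ) < 1 := by
  rcases d.eq_zero_or_pos with rfl | hd
  · simp
  · rw [div_lt_one (by positivity)]
    have : (1 : ℝ) ≤ d := by exact_mod_cast hd
    linarith

lemma one_div_two_mul_mul_add_one_le_one (d : ℕ) : 1 / (2 * d : ℝ) * (d + 1) ≤ 1 := by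
  rcases d.eq_zero_or_pos with rfl | hd
  · simp
  · rw [one_div_mul_eq_div, div_le_one (by positivity)]
    have : (1 : ℝ) ≤ d := by exact_mod_cast hd
    linarith

theorem exists_center_of_dual_cone_general
    (d : ℕ) (Φ : Set (EuclideanSpace ℝ (Fin d))) (hne : Φ.Nonempty)
    (hcomp : IsCompact Φ) (hconv : Convex ℝ Φ) :
    ∃ φbar ∈ Φ, ∀ ψ : EuclideanSpace ℝ (Fin d),
      (∀ φ ∈ Φ, 0 ≤ ⟪φ, ψ⟫) → ∀ φ ∈ Φ, (1 / (2 * d)) * ⟪φ, ψ⟫ ≤ ⟪φbar, ψ⟫ := by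
  have hc1 := one_div_two_mul_lt_one d
  have hcE : 1 / (2 * d : ℝ) * (finrank ℝ (EuclideanSpace ℝ (Fin d)) + 1) ≤ 1 := by
    simpa only [finrank_euclideanSpace_fin] using one_div_two_mul_mul_add_one_le_one d
  obtain ⟨φbar, hφbar, hsplit⟩ :=
    hconv.exists_mem_forall_exists_smul_add_smul_eq hcomp hne (by positivity) hc1 hcE
  refine ⟨φbar, hφbar, fun ψ hψ φ hφ ↦ ?_⟩
  obtain ⟨y, hy, rfl⟩ := hsplit φ hφ
  rw [inner_add_left, real_inner_smul_left, real_inner_smul_left]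
  nlinarith [hψ y hy]

/-- For a nonempty compact convex set `Φ ⊆ ℝ^d`, there is a single point `φ̄ ∈ Φ` such that
for every `ψ` in the dual cone `Φ* = {ψ | ⟨φ, ψ⟩ ≥ 0 ∀ φ ∈ Φ}` and every `φ ∈ Φ`,
`⟨φ̄, ψ⟩ ≥ (1/(2d)) ⟨φ, ψ⟩`. -/
theorem exists_center_of_dual_cone (d : ℕ) (hd : 1 ≤ d)
    (Φ : Set (EuclideanSpace ℝ (Fin d))) (hne : Φ.Nonempty)
    (hcomp : IsCompact Φ) (hconv : Convex ℝ Φ) :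
    ∃ φbar ∈ Φ, ∀ ψ : EuclideanSpace ℝ (Fin d),
      (∀ φ ∈ Φ, 0 ≤ ⟪φ, ψ⟫) → ∀ φ ∈ Φ, (1 / (2 * d)) * ⟪φ, ψ⟫ ≤ ⟪φbar, ψ⟫ :=
  exists_center_of_dual_cone_general d Φ hne hcomp hconv
end

section
/- Let d ≥ 1 and let Φ be a compact convex subset of ℝ^d with nonempty interior. Let φ̄ = (∫_Φ x dx) / vol(Φ) be the barycenter of Φ with respect to Lebesgue measure. Then for every ψ ∈ ℝ^d satisfying ⟨φ, ψ⟩ ≥ 0 for all φ ∈ Φ, one has ⟨φ̄, ψ⟩ ≥ (1/(d+1)) · max_{φ ∈ Φ} ⟨φ, ψ⟩. -/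
open scoped RealInnerProductSpace
open MeasureTheory Set Module AffineMap

/-!
For `l ∈ (0, 1)` the homothety of ratio `l` centred at `φ ∈ Φ` maps `Φ` into itself, and
`x ↦ ⟪x, ψ⟫` is nonnegative on `Φ`. Comparing the integral of `⟪·, ψ⟫` over `Φ` with its
integral over the image of `Φ` gives `l I + (1 - l) ⟪φ, ψ⟫ V ≤ l⁻ᵈ I`, where `I = ∫_Φ ⟪x, ψ⟫`
and `V = vol Φ`; both sides agree at `l = 1`, and comparing their derivatives there yields
`⟪φ, ψ⟫ V ≤ (d + 1) I`.
-/

theorem le_add_one_mul_of_forall_mem_Ioo {A B : ℝ} {n : ℕ}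
    (h : ∀ l ∈ Ioo (0 : ℝ) 1, l * B + (1 - l) * A ≤ (l ^ n)⁻¹ * B) : A ≤ (n + 1) * B := by
  have hgeom : ∀ l ∈ Ioo (0 : ℝ) 1, l ^ n * A ≤ (∑ k ∈ Finset.range (n + 1), l ^ k) * B := by
    rintro l ⟨hl0, hl1⟩
    have hln : 0 < l ^ n := pow_pos hl0 n
    have hmul := mul_le_mul_of_nonneg_left (h l ⟨hl0, hl1⟩) hln.le
    rw [← mul_assoc, mul_inv_cancel₀ hln.ne', one_mul] at hmul
    refine le_of_mul_le_mul_left ?_ (sub_pos.mpr hl1)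
    calc (1 - l) * (l ^ n * A) = l ^ n * (l * B + (1 - l) * A) - l ^ (n + 1) * B := by ring
      _ ≤ (1 - l ^ (n + 1)) * B := by linarith
      _ = (1 - l) * ((∑ k ∈ Finset.range (n + 1), l ^ k) * B) := by
        rw [← mul_assoc, mul_neg_geom_sum]
  have hclosed := isClosed_le (f := fun l : ℝ => l ^ n * A)
    (g := fun l => (∑ k ∈ Finset.range (n + 1), l ^ k) * B) (by fun_prop) (by fun_prop)
  have h1 : (1 : ℝ) ∈ closure (Ioo 0 1) := by
    rw [closure_Ioo zero_ne_one]
    exact right_mem_Icc.mpr zero_le_one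
  simpa using hclosed.closure_subset_iff.mpr hgeom h1

theorem setIntegral_comp_homothety_of_isCompact {E : Type*} [NormedAddCommGroup E]
    [NormedSpace ℝ E] [MeasurableSpace E] [OpensMeasurableSpace E] (μ : Measure E)
    [IsFiniteMeasureOnCompacts μ] {Φ : Set E} (hcomp : IsCompact Φ)
    (f : E →L[ℝ] ℝ) (c : E) (l : ℝ) :
    ∫ x in Φ, f (homothety c l x) ∂μ = l * ∫ x in Φ, f x ∂μ + (1 - l) * (f c * μ.real Φ) := by
  simp_rw [homothety_eq_lineMap, lineMap_apply_module, map_add, map_smul, smul_eq_mul]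
  have hfΦ : IntegrableOn f Φ μ := f.continuous.continuousOn.integrableOn_compact hcomp
  rw [integral_add (integrableOn_const hcomp.measure_lt_top.ne).integrable (hfΦ.const_mul l),
    setIntegral_const, integral_const_mul, smul_eq_mul]
  ring

section

variable {E : Type*} [NormedAddCommGroup E] [NormedSpace ℝ E] [MeasurableSpace E] [BorelSpace E]
  [FiniteDimensional ℝ E] (μ : Measure E) [μ.IsAddHaarMeasure]

theorem integral_comp_homothety {F : Type*} [NormedAddCommGroup F] [NormedSpace ℝ F]
    (g : E → F) (c : E) (l : ℝ) :
    ∫ x, g (homothety c l x) ∂μ = |(l ^ finrank ℝ E)⁻¹| • ∫ x, g x ∂μ := by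
  simp_rw [homothety_eq_lineMap, lineMap_apply_module, add_comm ((1 - l) • c)]
  rw [Measure.integral_comp_smul μ (fun y => g (y + (1 - l) • c)), integral_add_right_eq_self]

theorem setIntegral_comp_homothety_le {Φ : Set E} (hΦ : MeasurableSet Φ) {g : E → ℝ}
    (hg : IntegrableOn g Φ μ) (hg0 : ∀ x ∈ Φ, 0 ≤ g x) {c : E} {l : ℝ} (hl : l ≠ 0)
    (hmaps : MapsTo (homothety c l) Φ Φ) :
    ∫ x in Φ, g (homothety c l x) ∂μ ≤ |(l ^ finrank ℝ E)⁻¹| * ∫ x in Φ, g x ∂μ := by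
  have hG : Integrable (fun x => Φ.indicator g (homothety c l x)) μ := by
    simp_rw [homothety_eq_lineMap, lineMap_apply_module, add_comm ((1 - l) • c)]
    exact ((hg.integrable_indicator hΦ).comp_add_right _).comp_smul hl
  calc ∫ x in Φ, g (homothety c l x) ∂μ = ∫ x in Φ, Φ.indicator g (homothety c l x) ∂μ :=
        setIntegral_congr_fun hΦ fun x hx => (indicator_of_mem (hmaps hx) g).symm
    _ ≤ ∫ x, Φ.indicator g (homothety c l x) ∂μ :=
        setIntegral_le_integral hG (.of_forall fun x => indicator_nonneg hg0 _)
    _ = |(l ^ finrank ℝ E)⁻¹| * ∫ x in Φ, g x ∂μ := by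
        rw [integral_comp_homothety, integral_indicator hΦ, smul_eq_mul]

theorem Convex.apply_mul_measureReal_le_setIntegral {Φ : Set E} (hconv : Convex ℝ Φ)
    (hcomp : IsCompact Φ) {f : E →L[ℝ] ℝ} (hf : ∀ x ∈ Φ, 0 ≤ f x) {c : E} (hc : c ∈ Φ) :
    f c * μ.real Φ ≤ (finrank ℝ E + 1) * ∫ x in Φ, f x ∂μ := by
  refine le_add_one_mul_of_forall_mem_Ioo fun l ⟨hl0, hl1⟩ => ?_
  have hmaps : MapsTo (homothety c l) Φ Φ := fun x hx => by
    rw [homothety_eq_lineMap]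
    exact hconv.lineMap_mem hc hx ⟨hl0.le, hl1.le⟩
  calc l * ∫ x in Φ, f x ∂μ + (1 - l) * (f c * μ.real Φ)
      = ∫ x in Φ, f (homothety c l x) ∂μ :=
        (setIntegral_comp_homothety_of_isCompact μ hcomp f c l).symm
    _ ≤ |(l ^ finrank ℝ E)⁻¹| * ∫ x in Φ, f x ∂μ :=
        setIntegral_comp_homothety_le μ hcomp.measurableSet
          (f.continuous.continuousOn.integrableOn_compact hcomp) hf hl0.ne' hmaps
    _ = (l ^ finrank ℝ E)⁻¹ * ∫ x in Φ, f x ∂μ := by rw [abs_of_pos (by positivity)]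

end

theorem barycenter_dual_cone_general (d : ℕ)
    (Φ : Set (EuclideanSpace ℝ (Fin d)))
    (hcomp : IsCompact Φ) (hconv : Convex ℝ Φ) (hint : (interior Φ).Nonempty)
    (φbar : EuclideanSpace ℝ (Fin d))
    (hbar : φbar = (volume Φ).toReal⁻¹ • ∫ x in Φ, x) :
    ∀ ψ : EuclideanSpace ℝ (Fin d),
      (∀ φ ∈ Φ, 0 ≤ ⟪φ, ψ⟫) → ∀ φ ∈ Φ, (1 / (d + 1)) * ⟪φ, ψ⟫ ≤ ⟪φbar, ψ⟫ := by
  intro ψ hψ φ hφ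
  have hV : 0 < volume.real Φ :=
    ENNReal.toReal_pos (Measure.measure_pos_of_nonempty_interior volume hint).ne'
      hcomp.measure_lt_top.ne
  have hbarψ : ⟪φbar, ψ⟫ = (volume.real Φ)⁻¹ * ∫ x in Φ, innerSL ℝ ψ x := by
    rw [hbar, real_inner_smul_left, real_inner_comm, measureReal_def,
      (innerSL ℝ ψ).integral_comp_comm (φ := fun x => x)
        (continuous_id.continuousOn.integrableOn_compact hcomp), innerSL_apply_apply]
  have key := hconv.apply_mul_measureReal_le_setIntegral volume hcomp (f := innerSL ℝ ψ)
    (fun x hx => by simpa [real_inner_comm] using hψ x hx) hφ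
  rw [finrank_euclideanSpace_fin, innerSL_apply_apply, real_inner_comm] at key
  rw [hbarψ]
  field_simp
  linarith

/-- For a compact convex `Φ ⊆ ℝ^d` with nonempty interior, the Lebesgue barycenter
`φ̄ = (∫_Φ x dx)/vol(Φ)` satisfies `⟨φ̄, ψ⟩ ≥ (1/(d+1)) max_{φ∈Φ} ⟨φ, ψ⟩` for every `ψ`
in the dual cone of `Φ`. -/
theorem barycenter_dual_cone (d : ℕ) (hd : 1 ≤ d)
    (Φ : Set (EuclideanSpace ℝ (Fin d)))
    (hcomp : IsCompact Φ) (hconv : Convex ℝ Φ) (hint : (interior Φ).Nonempty)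
    (φbar : EuclideanSpace ℝ (Fin d))
    (hbar : φbar = (volume Φ).toReal⁻¹ • ∫ x in Φ, x) :
    ∀ ψ : EuclideanSpace ℝ (Fin d),
      (∀ φ ∈ Φ, 0 ≤ ⟪φ, ψ⟫) → ∀ φ ∈ Φ, (1 / (d + 1)) * ⟪φ, ψ⟫ ≤ ⟪φbar, ψ⟫ :=
  barycenter_dual_cone_general d Φ hcomp hconv hint φbar hbar
end

section
/- Let d ≥ 1, let Φ be a nonempty compact convex subset of ℝ^d, let ψ ∈ ℝ^d, and let l = max_{φ ∈ Φ} ⟨φ, ψ⟩. For w ∈ ℝ define the slice V(w) = { φ ∈ Φ : ⟨φ, ψ⟩ = w }. Then for all real numbers x, y with 0 < x ≤ y, the (d−1)-dimensional Hausdorff measures of the slices satisfy H^{d−1}(V(l − x)) ≥ (x/y)^{d−1} · H^{d−1}(V(l − y)). -/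
open scoped RealInnerProductSpace
open MeasureTheory

/-! Shrinking `Φ` towards a maximiser `φ₀` of `⟪·, ψ⟫` by the factor `x / y` keeps it inside `Φ`
(convexity) and carries the slice at level `l - y` into the slice at level `l - x`. So `V (l - y)`
lies in the image of `V (l - x)` under the homothety of ratio `y / x` about `φ₀`, and that
homothety multiplies `μH[d - 1]` by `(y / x) ^ (d - 1)`. -/

theorem Convex.levelSet_subset_homothety_image {E : Type*} [AddCommGroup E] [Module ℝ E]
    {Φ : Set E} (hΦ : Convex ℝ Φ) {φ₀ : E} (hφ₀ : φ₀ ∈ Φ) (f : E →ₗ[ℝ] ℝ) {x y : ℝ}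
    (hx : 0 < x) (hxy : x ≤ y) :
    {φ ∈ Φ | f φ = f φ₀ - y} ⊆ AffineMap.homothety φ₀ (y / x) '' {φ ∈ Φ | f φ = f φ₀ - x} := by
  rintro φ ⟨hφ, hfφ⟩
  have hy : 0 < y := hx.trans_le hxy
  refine ⟨AffineMap.lineMap φ₀ φ (x / y), ⟨?_, ?_⟩, ?_⟩
  · exact hΦ.lineMap_mem hφ₀ hφ ⟨by positivity, div_le_one_of_le₀ hxy hy.le⟩
  · simp only [AffineMap.lineMap_apply_module, map_add, map_smul, smul_eq_mul, hfφ]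
    field_simp
    ring
  · have hyx : y / x * (x / y) = 1 := by field_simp
    rw [← AffineMap.homothety_eq_lineMap, ← AffineMap.homothety_mul_apply, hyx,
      AffineMap.homothety_one, AffineMap.id_apply]

theorem MeasureTheory.Measure.hausdorffMeasure_le_of_subset_homothety_image
    {E : Type*} [NormedAddCommGroup E] [NormedSpace ℝ E] [MeasurableSpace E] [BorelSpace E]
    {d r : ℝ} (hd : 0 ≤ d) (hr : 0 < r) {c : E} {s t : Set E}
    (hst : s ⊆ AffineMap.homothety c r '' t) :
    ENNReal.ofReal (r⁻¹ ^ d) * μH[d] s ≤ μH[d] t := by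
  have hscale : ENNReal.ofReal (r⁻¹ ^ d) * ↑(‖r‖₊ ^ d) = 1 := by
    rw [← ENNReal.ofReal_coe_nnreal, NNReal.coe_rpow, coe_nnnorm, Real.norm_of_nonneg hr.le,
      ← ENNReal.ofReal_mul (by positivity), Real.inv_rpow hr.le, inv_mul_cancel₀ (by positivity),
      ENNReal.ofReal_one]
  calc ENNReal.ofReal (r⁻¹ ^ d) * μH[d] s
      ≤ ENNReal.ofReal (r⁻¹ ^ d) * μH[d] (AffineMap.homothety c r '' t) := by gcongr
    _ = μH[d] t := by
      rw [hausdorffMeasure_homothety_image hd c hr.ne' t, ENNReal.smul_def, smul_eq_mul,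
        ← mul_assoc, hscale, one_mul]

theorem slice_measure_ineq_general (d : ℕ) (hd : 1 ≤ d)
    (Φ : Set (EuclideanSpace ℝ (Fin d)))
    (hconv : Convex ℝ Φ)
    (ψ : EuclideanSpace ℝ (Fin d)) (l : ℝ)
    (hl : IsGreatest ((fun φ => ⟪φ, ψ⟫) '' Φ) l)
    (V : ℝ → Set (EuclideanSpace ℝ (Fin d)))
    (hV : ∀ w, V w = {φ ∈ Φ | ⟪φ, ψ⟫ = w}) :
    ∀ x y : ℝ, 0 < x → x ≤ y →
      ENNReal.ofReal ((x / y) ^ (d - 1)) * μH[(d : ℝ) - 1] (V (l - y))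
        ≤ μH[(d : ℝ) - 1] (V (l - x)) := by
  intro x y hx hxy
  obtain ⟨φ₀, hφ₀, hφ₀l⟩ := hl.1
  have hslice : V (l - y) ⊆ AffineMap.homothety φ₀ (y / x) '' V (l - x) := by
    simpa only [hV, ← hφ₀l, LinearMap.flip_apply, innerₗ_apply_apply] using
      hconv.levelSet_subset_homothety_image hφ₀ ((innerₗ _).flip ψ) hx hxy
  have hdim : ((d - 1 : ℕ) : ℝ) = (d : ℝ) - 1 := by push_cast [hd]; ring
  rw [← Real.rpow_natCast, hdim, ← inv_div]
  exact Measure.hausdorffMeasure_le_of_subset_homothety_image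
    (sub_nonneg.2 (Nat.one_le_cast.2 hd)) (div_pos (hx.trans_le hxy) hx) hslice

/-- Slice-measure inequality: for a nonempty compact convex `Φ ⊆ ℝ^d`, `ψ ∈ ℝ^d`,
`l = max_{φ∈Φ} ⟨φ, ψ⟩` and slices `V(w) = {φ ∈ Φ | ⟨φ, ψ⟩ = w}`, for `0 < x ≤ y` the
`(d-1)`-dimensional Hausdorff measures satisfy
`H^{d-1}(V(l-x)) ≥ (x/y)^{d-1} · H^{d-1}(V(l-y))`. -/
theorem slice_measure_ineq (d : ℕ) (hd : 1 ≤ d)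
    (Φ : Set (EuclideanSpace ℝ (Fin d))) (hne : Φ.Nonempty)
    (hcomp : IsCompact Φ) (hconv : Convex ℝ Φ)
    (ψ : EuclideanSpace ℝ (Fin d)) (l : ℝ)
    (hl : IsGreatest ((fun φ => ⟪φ, ψ⟫) '' Φ) l)
    (V : ℝ → Set (EuclideanSpace ℝ (Fin d)))
    (hV : ∀ w, V w = {φ ∈ Φ | ⟪φ, ψ⟫ = w}) :
    ∀ x y : ℝ, 0 < x → x ≤ y →
      ENNReal.ofReal ((x / y) ^ (d - 1)) * μH[(d : ℝ) - 1] (V (l - y))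
        ≤ μH[(d : ℝ) - 1] (V (l - x)) :=
  slice_measure_ineq_general d hd Φ hconv ψ l hl V hV
end

section
/- Let d ≥ 1 be an integer and l > 0. Let f : [0, l] → ℝ be a continuous nonnegative function with ∫₀^l f(x) dx = 1, and suppose that for all real x, y with 0 < x ≤ y ≤ l one has f(l − y) · x^{d−1} ≤ f(l − x) · y^{d−1}. Then the mean z = ∫₀^l x·f(x) dx satisfies z ≥ l/(d+1). -/
/-!
Reflect `f` to `g y = f (l - y)`, so that the hypothesis reads `g y * x^(d-1) ≤ g x * y^(d-1)`
for `0 < x ≤ y ≤ l`. Integrating it in `x` over `[0, y]` gives `y g(y) ≤ d G(y)` with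
`G(y) = ∫₀^y g`, and integrating that over `[0, l]`, with `∫₀^l G = ∫₀^l (l - y) g(y)` by parts,
yields `(d + 1) ∫₀^l y g(y) ≤ d l`. Since `∫₀^l y g(y) = l - ∫₀^l x f(x)`, this is the claim.
-/

open MeasureTheory intervalIntegral Set
open scoped Interval

theorem integral_integral_eq_integral_sub_mul {g : ℝ → ℝ} {a b : ℝ}
    (hg : ContinuousOn g [[a, b]]) :
    ∫ y in a..b, (∫ x in a..y, g x) = ∫ y in a..b, (b - y) * g y := by
  have hderiv : ∀ y ∈ Ioo (min a b) (max a b),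
      HasDerivAt (fun t => ∫ x in a..t, g x) (g y) y := fun y hy =>
    integral_hasDerivAt_right
      (hg.intervalIntegrable.mono_set (uIcc_subset_uIcc_left (Ioo_subset_Icc_self hy)))
      ((hg.mono Ioo_subset_Icc_self).stronglyMeasurableAtFilter isOpen_Ioo y hy)
      (hg.continuousAt (Icc_mem_nhds hy.1 hy.2))
  have hparts := integral_mul_deriv_eq_deriv_mul_of_hasDerivAt (u := fun y => y - b)
    (continuousOn_id.sub continuousOn_const)
    (continuousOn_primitive_interval (hg.integrableOn_compact isCompact_uIcc))
    (fun y _ => (hasDerivAt_id y).sub_const b) hderiv intervalIntegrable_const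
    hg.intervalIntegrable
  simp only [sub_self, integral_same, mul_zero, zero_mul, one_mul, zero_sub] at hparts
  rw [← neg_neg (∫ y in a..b, ∫ x in a..y, g x), ← hparts, ← intervalIntegral.integral_neg]
  congr 1 with y
  ring

theorem mul_le_nat_mul_integral_of_pow_shape {g : ℝ → ℝ} {d : ℕ} (hd : 1 ≤ d) {y : ℝ}
    (hy : 0 < y) (hg : IntervalIntegrable g volume 0 y)
    (hshape : ∀ x ∈ Ioo 0 y, g y * x ^ (d - 1) ≤ g x * y ^ (d - 1)) :
    y * g y ≤ d * ∫ x in 0..y, g x := by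
  obtain ⟨n, rfl⟩ : ∃ n, d = n + 1 := ⟨d - 1, by omega⟩
  simp only [Nat.add_sub_cancel] at hshape
  have hmono : ∫ x in 0..y, g y * x ^ n ≤ ∫ x in 0..y, g x * y ^ n :=
    integral_mono_on_of_le_Ioo hy.le
      ((continuous_const.mul (continuous_pow n)).intervalIntegrable _ _) (hg.mul_const _) hshape
  rw [intervalIntegral.integral_const_mul, intervalIntegral.integral_mul_const, integral_pow,
    zero_pow n.succ_ne_zero, sub_zero] at hmono
  refine le_of_mul_le_mul_right ?_ (pow_pos hy n)
  calc y * g y * y ^ n = (n + 1) * (g y * (y ^ (n + 1) / (n + 1))) := by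
        field_simp; ring
    _ ≤ (n + 1) * ((∫ x in 0..y, g x) * y ^ n) := by gcongr
    _ = _ := by push_cast; ring

theorem nat_succ_mul_integral_mul_le_of_pow_shape {g : ℝ → ℝ} {d : ℕ} (hd : 1 ≤ d) {l : ℝ}
    (hl : 0 ≤ l) (hg : ContinuousOn g (Icc 0 l))
    (hshape : ∀ x y : ℝ, 0 < x → x ≤ y → y ≤ l → g y * x ^ (d - 1) ≤ g x * y ^ (d - 1)) :
    (d + 1) * ∫ y in 0..l, y * g y ≤ d * l * ∫ y in 0..l, g y := by
  rw [← uIcc_of_le hl] at hg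
  have hpointwise : ∀ y ∈ Icc 0 l, y * g y ≤ d * ∫ x in 0..y, g x := by
    rintro y ⟨hy0, hyl⟩
    rcases hy0.eq_or_lt with rfl | hy0
    · simp
    · exact mul_le_nat_mul_integral_of_pow_shape hd hy0
        (hg.intervalIntegrable.mono_set
          (uIcc_subset_uIcc_left (by rw [uIcc_of_le hl]; exact ⟨hy0.le, hyl⟩)))
        fun x hx => hshape x y hx.1 hx.2.le hyl
  have hprimitive : ContinuousOn (fun y => ∫ x in 0..y, g x) [[0, l]] :=
    continuousOn_primitive_interval (hg.integrableOn_compact isCompact_uIcc)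
  have hmoment : IntervalIntegrable (fun y => y * g y) volume 0 l :=
    (continuousOn_id.mul hg).intervalIntegrable
  have hmono : ∫ y in 0..l, y * g y ≤ d * ∫ y in 0..l, (l - y) * g y := by
    rw [← integral_integral_eq_integral_sub_mul hg, ← intervalIntegral.integral_const_mul]
    exact integral_mono_on hl hmoment (continuousOn_const.mul hprimitive).intervalIntegrable
      hpointwise
  have hsplit :
      ∫ y in 0..l, (l - y) * g y = l * (∫ y in 0..l, g y) - ∫ y in 0..l, y * g y := by
    simp_rw [sub_mul]
    rw [intervalIntegral.integral_sub (hg.intervalIntegrable.const_mul l) hmoment,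
      intervalIntegral.integral_const_mul]
  rw [hsplit] at hmono
  linarith

theorem mean_lower_bound_general (d : ℕ) (hd : 1 ≤ d) (l : ℝ) (hl : 0 < l) (f : ℝ → ℝ)
    (hcont : ContinuousOn f (Set.Icc 0 l))
    (hint : ∫ x in (0:ℝ)..l, f x = 1)
    (hshape : ∀ x y : ℝ, 0 < x → x ≤ y → y ≤ l →
      f (l - y) * x ^ (d - 1) ≤ f (l - x) * y ^ (d - 1)) :
    l / (d + 1) ≤ ∫ x in (0:ℝ)..l, x * f x := by
  have hreflect : ContinuousOn (fun y => f (l - y)) (Icc 0 l) :=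
    hcont.comp (continuousOn_const.sub continuousOn_id) fun y ⟨hy0, hyl⟩ =>
      ⟨by linarith, by linarith⟩
  have hbound := nat_succ_mul_integral_mul_le_of_pow_shape hd hl.le hreflect hshape
  have hmass : ∫ y in 0..l, f (l - y) = 1 := by
    simpa [intervalIntegral.integral_comp_sub_left (fun x => f x) l] using hint
  have hmoment : ∫ y in 0..l, y * f (l - y) = l - ∫ x in 0..l, x * f x := by
    have hf : IntervalIntegrable f volume 0 l := hcont.intervalIntegrable_of_Icc hl.le
    have hxf : IntervalIntegrable (fun x => x * f x) volume 0 l :=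
      (continuousOn_id.mul hcont).intervalIntegrable_of_Icc hl.le
    calc ∫ y in 0..l, y * f (l - y) = ∫ x in 0..l, (l - x) * f x := by
          simpa using
            intervalIntegral.integral_comp_sub_left (fun x => (l - x) * f x) l (a := 0) (b := l)
      _ = l - ∫ x in 0..l, x * f x := by
          simp_rw [sub_mul]
          rw [intervalIntegral.integral_sub (hf.const_mul l) hxf,
            intervalIntegral.integral_const_mul, hint, mul_one]
  rw [hmass, hmoment] at hbound
  rw [div_le_iff₀ (by positivity)]
  linarith

/-- One-dimensional density lemma: if `f ≥ 0` is continuous on `[0, l]`, integrates to `1`,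
and satisfies `f(l-y)·x^{d-1} ≤ f(l-x)·y^{d-1}` for `0 < x ≤ y ≤ l`, then its mean
`∫₀^l x f(x) dx` is at least `l/(d+1)`. -/
theorem mean_lower_bound (d : ℕ) (hd : 1 ≤ d) (l : ℝ) (hl : 0 < l) (f : ℝ → ℝ)
    (hcont : ContinuousOn f (Set.Icc 0 l)) (hnonneg : ∀ x ∈ Set.Icc 0 l, 0 ≤ f x)
    (hint : ∫ x in (0:ℝ)..l, f x = 1)
    (hshape : ∀ x y : ℝ, 0 < x → x ≤ y → y ≤ l →
      f (l - y) * x ^ (d - 1) ≤ f (l - x) * y ^ (d - 1)) :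
    l / (d + 1) ≤ ∫ x in (0:ℝ)..l, x * f x :=
  mean_lower_bound_general d hd l hl f hcont hint hshape
end

section
/- Let l ≥ 1 be a positive integer, and let φ_1, …, φ_n and ψ_1, …, ψ_m (with m ≥ 1) be vectors in ℝ^l satisfying ⟨φ_i, ψ_j⟩ ≥ 0 for all 1 ≤ i ≤ n and 1 ≤ j ≤ m. Then Σ_{i=1}^{n} max_{1≤j≤m} ⟨φ_i, ψ_j⟩ ≤ 2·l · max_{1≤j≤m} Σ_{i=1}^{n} ⟨φ_i, ψ_j⟩. -/
/-!
Choose for each `i` an index `σ i` at which `⟪φ i, ψ j⟫` is maximal. The `m × m` matrix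
`M j j' = ∑_{σ i = j'} ⟪φ i, ψ j⟫` is nonnegative, its row sums are the sums `∑ i, ⟪φ i, ψ j⟫`,
and its trace is the left-hand side. Since `M` factors through `ℝ^l`, its trace is the trace of an
`l × l` matrix whose nonzero eigenvalues are eigenvalues of `M`, hence bounded by the `ℓ^∞`
operator norm of `M`, its largest row sum.
-/

open scoped RealInnerProductSpace
open Polynomial

namespace Matrix

variable {m n : Type*} [Fintype m] [Fintype n]

theorem isRoot_charpoly_mul_comm [DecidableEq m] [DecidableEq n] {R : Type*} [CommRing R]
    [IsDomain R] (A : Matrix m n R) (B : Matrix n m R) {t : R} (ht : t ≠ 0) :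
    (A * B).charpoly.IsRoot t ↔ (B * A).charpoly.IsRoot t := by
  have h := congrArg (eval t) (charpoly_mul_comm' A B)
  simp only [eval_mul, eval_pow, eval_X] at h
  simp only [IsRoot.def]
  constructor <;> intro h0
  · simpa [h0, ht] using h.symm
  · simpa [h0, ht] using h

theorem norm_trace_le_card_mul [DecidableEq n] {𝕜 : Type*} [NormedField 𝕜] [IsAlgClosed 𝕜]
    (A : Matrix n n 𝕜) {R : ℝ} (h : ∀ t, A.charpoly.IsRoot t → ‖t‖ ≤ R) :
    ‖A.trace‖ ≤ Fintype.card n * R := by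
  rw [trace_eq_sum_roots_charpoly]
  calc ‖A.charpoly.roots.sum‖ ≤ (A.charpoly.roots.map norm).sum := norm_multiset_sum_le _
    _ ≤ A.charpoly.roots.card • R := by
        rw [← Multiset.card_map norm]
        refine Multiset.sum_le_card_nsmul _ _ ?_
        simp only [Multiset.mem_map, mem_roots', forall_exists_index, and_imp]
        rintro _ t - ht rfl
        exact h t ht
    _ = Fintype.card n * R := by
        rw [IsAlgClosed.card_roots_eq_natDegree, charpoly_natDegree_eq_dim, nsmul_eq_mul]

section linftyOp

attribute [local instance] Matrix.linftyOpNormedAddCommGroup Matrix.linftyOpNormedRing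
  Matrix.linftyOpNormedAlgebra

theorem norm_trace_mul_le {𝕜 : Type*} [NontriviallyNormedField 𝕜] [IsAlgClosed 𝕜]
    [CompleteSpace 𝕜] (A : Matrix m n 𝕜) (B : Matrix n m 𝕜) :
    ‖(A * B).trace‖ ≤ Fintype.card n * ‖A * B‖ := by
  classical
  cases isEmpty_or_nonempty m
  · simp only [trace, Finset.univ_eq_empty, Finset.sum_empty, norm_zero]
    positivity
  -- passed by hand: instance search does not identify the uniformities of the two norm instances
  have hc := FiniteDimensional.complete 𝕜 (Matrix m m 𝕜)
  rw [trace_mul_comm]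
  refine norm_trace_le_card_mul _ fun t ht => ?_
  rcases eq_or_ne t 0 with rfl | ht0
  · simp
  exact @spectrum.norm_le_norm_of_mem _ _ _ _ _ hc _ _ _ <|
    mem_spectrum_iff_isRoot_charpoly.2 <| (isRoot_charpoly_mul_comm A B ht0).2 ht

theorem linfty_opNorm_map_ofReal (A : Matrix m n ℝ) : ‖A.map Complex.ofRealHom‖ = ‖A‖ := by
  simp [linfty_opNorm_def]

theorem abs_trace_mul_le (A : Matrix m n ℝ) (B : Matrix n m ℝ) :
    |(A * B).trace| ≤ Fintype.card n * ‖A * B‖ := by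
  have h := norm_trace_mul_le (A.map Complex.ofRealHom) (B.map Complex.ofRealHom)
  rwa [← Matrix.map_mul, ← AddMonoidHom.map_trace, linfty_opNorm_map_ofReal,
    Complex.ofRealHom_eq_coe, Complex.norm_real, Real.norm_eq_abs] at h

theorem linfty_opNorm_le_of_nonneg {M : Matrix m n ℝ} {R : ℝ} (hR : 0 ≤ R)
    (hM : ∀ i j, 0 ≤ M i j) (h : ∀ i, ∑ j, M i j ≤ R) : ‖M‖ ≤ R := by
  lift R to NNReal using hR
  rw [← coe_nnnorm, NNReal.coe_le_coe, linfty_opNNNorm_def]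
  refine Finset.sup_le fun i _ => ?_
  rw [← NNReal.coe_le_coe, NNReal.coe_sum]
  simpa [abs_of_nonneg (hM i _)] using h i

end linftyOp

variable {ι κ R : Type*} [Fintype ι] [DecidableEq κ] [NonAssocSemiring R]

variable (R) in
def graph (σ : ι → κ) : Matrix ι κ R :=
  of fun i j => if σ i = j then 1 else 0

theorem mul_graph_apply (G : Matrix κ ι R) (σ : ι → κ) (j j' : κ) :
    (G * graph R σ) j j' = ∑ i with σ i = j', G j i := by
  simp [mul_apply, graph, Finset.sum_filter]

theorem trace_mul_graph [Fintype κ] (G : Matrix κ ι R) (σ : ι → κ) :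
    (G * graph R σ).trace = ∑ i, G (σ i) i := by
  simp only [trace, diag, mul_graph_apply, Finset.sum_filter]
  rw [Finset.sum_comm]
  simp

theorem sum_mul_graph_apply [Fintype κ] (G : Matrix κ ι R) (σ : ι → κ) (j : κ) :
    ∑ j', (G * graph R σ) j j' = ∑ i, G j i := by
  simp only [mul_graph_apply]
  exact Finset.sum_fiberwise _ _ _

end Matrix

section

attribute [local instance] Matrix.linftyOpNormedAddCommGroup

variable {ι κ L : Type*} [Fintype ι] [Fintype κ] [Fintype L] [DecidableEq κ]

theorem sum_inner_le_card_mul (φ : ι → EuclideanSpace ℝ L) (ψ : κ → EuclideanSpace ℝ L)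
    (σ : ι → κ) (hpos : ∀ i j, 0 ≤ ⟪φ i, ψ j⟫) {R : ℝ} (hR : 0 ≤ R)
    (hsum : ∀ j, ∑ i, ⟪φ i, ψ j⟫ ≤ R) :
    ∑ i, ⟪φ i, ψ (σ i)⟫ ≤ Fintype.card L * R := by
  set Ψ : Matrix κ L ℝ := .of fun j k => ψ j k
  set Φ : Matrix L ι ℝ := .of fun k i => φ i k
  have hgram : ∀ j i, (Ψ * Φ) j i = ⟪φ i, ψ j⟫ := fun j i => by
    simp [Ψ, Φ, Matrix.mul_apply, PiLp.inner_apply, mul_comm]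
  have hM : ∀ j j', 0 ≤ (Ψ * Φ * Matrix.graph ℝ σ) j j' := fun j j' => by
    rw [Matrix.mul_graph_apply]
    exact Finset.sum_nonneg fun i _ => (hgram j i).symm ▸ hpos i j
  calc ∑ i, ⟪φ i, ψ (σ i)⟫ = (Ψ * Φ * Matrix.graph ℝ σ).trace := by
        simp [Matrix.trace_mul_graph, hgram]
    _ ≤ |(Ψ * (Φ * Matrix.graph ℝ σ)).trace| := by rw [Matrix.mul_assoc]; exact le_abs_self _
    _ ≤ Fintype.card L * ‖Ψ * (Φ * Matrix.graph ℝ σ)‖ := Matrix.abs_trace_mul_le _ _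
    _ ≤ Fintype.card L * R := by
        rw [← Matrix.mul_assoc]
        refine mul_le_mul_of_nonneg_left (Matrix.linfty_opNorm_le_of_nonneg hR hM fun j => ?_)
          (Nat.cast_nonneg _)
        simpa [Matrix.sum_mul_graph_apply, hgram] using hsum j

end

theorem sum_max_le_two_dim_max_sum_general (l n m : ℕ) (hm : 1 ≤ m)
    (φ : Fin n → EuclideanSpace ℝ (Fin l)) (ψ : Fin m → EuclideanSpace ℝ (Fin l))
    (hpos : ∀ i j, 0 ≤ ⟪φ i, ψ j⟫) :
    ∑ i, (Finset.univ.sup' (Finset.univ_nonempty_iff.mpr ⟨⟨0, hm⟩⟩)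
        fun j => ⟪φ i, ψ j⟫)
      ≤ 2 * l * Finset.univ.sup' (Finset.univ_nonempty_iff.mpr ⟨⟨0, hm⟩⟩)
        (fun j => ∑ i, ⟪φ i, ψ j⟫) := by
  set hne : (Finset.univ : Finset (Fin m)).Nonempty := Finset.univ_nonempty_iff.mpr ⟨⟨0, hm⟩⟩
  set R := Finset.univ.sup' hne fun j => ∑ i, ⟪φ i, ψ j⟫
  choose σ _ hσ using fun i => Finset.exists_mem_eq_sup' hne fun j => ⟪φ i, ψ j⟫
  have hsum : ∀ j, ∑ i, ⟪φ i, ψ j⟫ ≤ R := fun j =>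
    Finset.le_sup' (fun j => ∑ i, ⟪φ i, ψ j⟫) (Finset.mem_univ j)
  have hR : 0 ≤ R := (Finset.sum_nonneg fun i _ => hpos i ⟨0, hm⟩).trans (hsum ⟨0, hm⟩)
  calc ∑ i, Finset.univ.sup' hne (fun j => ⟪φ i, ψ j⟫) = ∑ i, ⟪φ i, ψ (σ i)⟫ := by
        simp only [hσ]
    _ ≤ l * R := by simpa using sum_inner_le_card_mul φ ψ σ hpos hR hsum
    _ ≤ 2 * l * R := by nlinarith [(Nat.cast_nonneg l : (0 : ℝ) ≤ l)]

/-- Lemma A.5: for vectors `φ_1,…,φ_n` and `ψ_1,…,ψ_m` in `ℝ^l` with all pairwise inner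
products nonnegative, `Σ_i max_j ⟨φ_i, ψ_j⟩ ≤ 2l · max_j Σ_i ⟨φ_i, ψ_j⟩`. -/
theorem sum_max_le_two_dim_max_sum (l n m : ℕ) (hl : 1 ≤ l) (hm : 1 ≤ m)
    (φ : Fin n → EuclideanSpace ℝ (Fin l)) (ψ : Fin m → EuclideanSpace ℝ (Fin l))
    (hpos : ∀ i j, 0 ≤ ⟪φ i, ψ j⟫) :
    ∑ i, (Finset.univ.sup' (Finset.univ_nonempty_iff.mpr ⟨⟨0, hm⟩⟩)
        fun j => ⟪φ i, ψ j⟫)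
      ≤ 2 * l * Finset.univ.sup' (Finset.univ_nonempty_iff.mpr ⟨⟨0, hm⟩⟩)
        (fun j => ∑ i, ⟪φ i, ψ j⟫) :=
  sum_max_le_two_dim_max_sum_general l n m hm φ ψ hpos
end

section
/- Let d ≥ 1, let φ_1, …, φ_n be vectors in ℝ^d, and let (θ_1, η_1), …, (θ_m, η_m) (with m ≥ 1) be pairs of vectors in ℝ^d such that ⟨φ_i, η_j⟩ − ⟨φ_i, θ_j⟩² ≥ 0 for all 1 ≤ i ≤ n and 1 ≤ j ≤ m. Then Σ_{i=1}^{n} max_{1≤j≤m} ( ⟨φ_i, η_j⟩ − ⟨φ_i, θ_j⟩² ) ≤ 2·(d+1)² · max_{1≤j≤m} Σ_{i=1}^{n} ( ⟨φ_i, η_j⟩ − ⟨φ_i, θ_j⟩² ). -/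
/-!
Lift `φ` to `x = (φ, -φ ⊗ φ)` and the pair `(θ, η)` to `y = (η, θ ⊗ θ)` in `ℝ^(d + d²)`, so that
`⟪φ, η⟫ - ⟪φ, θ⟫² = x ⬝ᵥ y` becomes bilinear. Choosing `r ≤ d + d²` of the `y_j` that maximize
`|det|` gives a barycentric spanner: by Cramer's rule every `y_j` is a combination of them with
coefficients in `[-1, 1]`. Nonnegativity then gives `x_i ⬝ᵥ y_j ≤ ∑_k x_i ⬝ᵥ y_(c k)` for every `j`,
and summing over `i` bounds the left-hand side by `r` times the largest column sum.
-/

open scoped RealInnerProductSpace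

open Module Submodule Finset

theorem Module.Basis.exists_isUnit_det_comp {𝕜 V ι κ : Type*} [Field 𝕜] [AddCommGroup V]
    [Module 𝕜 V] [Fintype κ] [DecidableEq κ] [Finite ι]
    (b : Basis κ 𝕜 V) {v : ι → V} (hv : span 𝕜 (Set.range v) = ⊤) :
    ∃ c : κ → ι, IsUnit (b.det (v ∘ c)) := by
  obtain ⟨μ, a, -, hspan, hli⟩ := exists_linearIndependent' 𝕜 v
  let B : Basis μ 𝕜 V := .mk hli (hspan.trans hv).ge
  refine ⟨a ∘ b.indexEquiv B, ?_⟩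
  have : v ∘ a ∘ b.indexEquiv B = ⇑(B.reindex (b.indexEquiv B).symm) := by
    ext k; simp [B]
  rw [this]
  exact b.isUnit_det _

section BarycentricSpanner

variable (𝕜 : Type*) {V ι : Type*} [Field 𝕜] [LinearOrder 𝕜] [AddCommGroup V] [Module 𝕜 V]

def IsBarycentricSpanner {r : ℕ} (v : ι → V) (c : Fin r → ι) : Prop :=
  ∀ j, ∃ lam : Fin r → 𝕜, (∀ k, |lam k| ≤ 1) ∧ v j = ∑ k, lam k • v (c k)

variable {𝕜}

theorem IsBarycentricSpanner.map {W : Type*} [AddCommGroup W] [Module 𝕜 W] {r : ℕ}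
    {v : ι → V} {c : Fin r → ι} (h : IsBarycentricSpanner 𝕜 v c) (f : V →ₗ[𝕜] W) :
    IsBarycentricSpanner 𝕜 (f ∘ v) c := fun j ↦ by
  obtain ⟨lam, hlam, hv⟩ := h j
  exact ⟨lam, hlam, by simp [hv]⟩

variable [IsStrictOrderedRing 𝕜]

theorem IsBarycentricSpanner.apply_le_sum {r : ℕ} {v : ι → V} {c : Fin r → ι}
    (h : IsBarycentricSpanner 𝕜 v c) (f : V →ₗ[𝕜] 𝕜) (hf : ∀ k, 0 ≤ f (v (c k))) (j : ι) :
    f (v j) ≤ ∑ k, f (v (c k)) := by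
  obtain ⟨lam, hlam, hv⟩ := h j
  rw [hv, map_sum]
  gcongr with k
  rw [map_smul, smul_eq_mul]
  exact mul_le_of_le_one_left (hf k) ((le_abs_self _).trans (hlam k))

theorem exists_isBarycentricSpanner_of_span_eq_top [FiniteDimensional 𝕜 V] [Finite ι]
    {v : ι → V} (hv : span 𝕜 (Set.range v) = ⊤) :
    ∃ c : Fin (finrank 𝕜 V) → ι, IsBarycentricSpanner 𝕜 v c := by
  classical
  let b := finBasis 𝕜 V
  obtain ⟨c₀, hc₀⟩ := b.exists_isUnit_det_comp hv
  have : Nonempty (Fin (finrank 𝕜 V) → ι) := ⟨c₀⟩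
  obtain ⟨c, hc⟩ := Finite.exists_max fun c : Fin (finrank 𝕜 V) → ι ↦ |b.det (v ∘ c)|
  have hdet : 0 < |b.det (v ∘ c)| := (abs_pos.mpr hc₀.ne_zero).trans_le (hc c₀)
  obtain ⟨hli, hsp⟩ := b.is_basis_iff_det.mpr (isUnit_iff_ne_zero.mpr (abs_pos.mp hdet))
  let B : Basis (Fin (finrank 𝕜 V)) 𝕜 V := .mk hli hsp.ge
  refine ⟨c, fun j ↦ ⟨fun k ↦ B.coord k (v j), fun k ↦ ?_, ?_⟩⟩
  · -- Cramer's rule: the coordinate times `det (v ∘ c)` is `det (v ∘ update c k j)`.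
    have hcramer := congr($(b.det_smul_mk_coord_eq_det_update hli hsp.ge k) (v j))
    simp only [LinearMap.smul_apply, smul_eq_mul, MultilinearMap.toLinearMap_apply,
      AlternatingMap.coe_multilinearMap, ← Function.comp_update] at hcramer
    have := hc (Function.update c k j)
    rw [← hcramer, abs_mul] at this
    exact (mul_le_iff_le_one_right hdet).mp this
  · conv_lhs => rw [← B.sum_repr (v j)]
    simp [B]

variable (𝕜) in
theorem exists_isBarycentricSpanner [FiniteDimensional 𝕜 V] [Finite ι] (v : ι → V) :
    ∃ r ≤ finrank 𝕜 V, ∃ c : Fin r → ι, IsBarycentricSpanner 𝕜 v c := by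
  let W := span 𝕜 (Set.range v)
  have hv : ∀ j, v j ∈ W := fun j ↦ subset_span ⟨j, rfl⟩
  obtain ⟨c, hc⟩ := exists_isBarycentricSpanner_of_span_eq_top
    ((span_range_subtype_eq_top_iff W hv).mpr rfl)
  exact ⟨_, W.finrank_le, c, hc.map W.subtype⟩

theorem sum_sup'_le_finrank_mul_sup'_sum [FiniteDimensional 𝕜 V] {κ : Type*} [Fintype ι]
    [Fintype κ] (hne : (univ : Finset ι).Nonempty) (f : κ → V →ₗ[𝕜] 𝕜) (v : ι → V)
    (hf : ∀ i j, 0 ≤ f i (v j)) :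
    ∑ i, univ.sup' hne (fun j ↦ f i (v j))
      ≤ finrank 𝕜 V * univ.sup' hne (fun j ↦ ∑ i, f i (v j)) := by
  obtain ⟨r, hr, c, hc⟩ := exists_isBarycentricSpanner 𝕜 v
  set S := univ.sup' hne (fun j ↦ ∑ i, f i (v j))
  have hS : 0 ≤ S := by
    obtain ⟨j, hj⟩ := hne
    exact (sum_nonneg fun i _ ↦ hf i j).trans (le_sup' (fun j ↦ ∑ i, f i (v j)) hj)
  calc ∑ i, univ.sup' hne (fun j ↦ f i (v j))
      ≤ ∑ i, ∑ k, f i (v (c k)) :=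
        sum_le_sum fun i _ ↦ sup'_le _ _ fun j _ ↦ hc.apply_le_sum (f i) (fun k ↦ hf i _) j
    _ = ∑ k, ∑ i, f i (v (c k)) := sum_comm
    _ ≤ ∑ _k : Fin r, S := sum_le_sum fun k _ ↦ le_sup' (fun j ↦ ∑ i, f i (v j)) (mem_univ _)
    _ = r * S := by simp
    _ ≤ finrank 𝕜 V * S := by gcongr

end BarycentricSpanner

theorem dotProduct_sum_elim_eq_inner_sub_sq {ι : Type*} [Fintype ι]
    (φ θ η : EuclideanSpace ℝ ι) :
    Sum.elim (⇑φ) (fun p : ι × ι ↦ -(φ p.1 * φ p.2)) ⬝ᵥ Sum.elim (⇑η) (fun p ↦ θ p.1 * θ p.2)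
      = ⟪φ, η⟫ - ⟪φ, θ⟫ ^ 2 := by
  simp only [dotProduct, Fintype.sum_sum_type, Sum.elim_inl, Sum.elim_inr, Fintype.sum_prod_type,
    PiLp.inner_apply, RCLike.inner_apply, conj_trivial, sq, sum_mul_sum, neg_mul, sum_neg_distrib]
  simp only [mul_comm, mul_left_comm, mul_assoc, sub_eq_add_neg]

theorem sum_max_variance_le_general (d n m : ℕ) (hm : 1 ≤ m)
    (φ : Fin n → EuclideanSpace ℝ (Fin d))
    (θ η : Fin m → EuclideanSpace ℝ (Fin d))
    (hpos : ∀ i j, 0 ≤ ⟪φ i, η j⟫ - ⟪φ i, θ j⟫ ^ 2) :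
    ∑ i, (Finset.univ.sup' (Finset.univ_nonempty_iff.mpr ⟨⟨0, hm⟩⟩)
        fun j => ⟪φ i, η j⟫ - ⟪φ i, θ j⟫ ^ 2)
      ≤ 2 * (d + 1) ^ 2 * Finset.univ.sup' (Finset.univ_nonempty_iff.mpr ⟨⟨0, hm⟩⟩)
        (fun j => ∑ i, (⟪φ i, η j⟫ - ⟪φ i, θ j⟫ ^ 2)) := by
  have hne := Finset.univ_nonempty_iff.mpr (⟨⟨0, hm⟩⟩ : Nonempty (Fin m))
  have key := sum_sup'_le_finrank_mul_sup'_sum hne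
    (fun i ↦ dotProductBilin ℝ ℝ
      (Sum.elim (⇑(φ i)) fun p : Fin d × Fin d ↦ -(φ i p.1 * φ i p.2)))
    (fun j ↦ Sum.elim (⇑(η j)) fun p ↦ θ j p.1 * θ j p.2)
    (by simpa only [dotProductBilin_apply_apply, dotProduct_sum_elim_eq_inner_sub_sq])
  simp only [dotProductBilin_apply_apply, dotProduct_sum_elim_eq_inner_sub_sq,
    finrank_fintype_fun_eq_card, Fintype.card_sum, Fintype.card_prod, Fintype.card_fin] at key
  refine key.trans (mul_le_mul_of_nonneg_right ?_ ?_)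
  · push_cast
    nlinarith
  · exact (sum_nonneg fun i _ ↦ hpos i ⟨0, hm⟩).trans
      (le_sup' (fun j ↦ ∑ i, (⟪φ i, η j⟫ - ⟪φ i, θ j⟫ ^ 2)) (mem_univ _))

/-- Variance version of Lemma A.5: if `⟨φ_i, η_j⟩ - ⟨φ_i, θ_j⟩² ≥ 0` for all `i, j`, then
`Σ_i max_j (⟨φ_i, η_j⟩ - ⟨φ_i, θ_j⟩²) ≤ 2(d+1)² · max_j Σ_i (⟨φ_i, η_j⟩ - ⟨φ_i, θ_j⟩²)`. -/
theorem sum_max_variance_le (d n m : ℕ) (hd : 1 ≤ d) (hm : 1 ≤ m)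
    (φ : Fin n → EuclideanSpace ℝ (Fin d))
    (θ η : Fin m → EuclideanSpace ℝ (Fin d))
    (hpos : ∀ i j, 0 ≤ ⟪φ i, η j⟫ - ⟪φ i, θ j⟫ ^ 2) :
    ∑ i, (Finset.univ.sup' (Finset.univ_nonempty_iff.mpr ⟨⟨0, hm⟩⟩)
        fun j => ⟪φ i, η j⟫ - ⟪φ i, θ j⟫ ^ 2)
      ≤ 2 * (d + 1) ^ 2 * Finset.univ.sup' (Finset.univ_nonempty_iff.mpr ⟨⟨0, hm⟩⟩)
        (fun j => ∑ i, (⟪φ i, η j⟫ - ⟪φ i, θ j⟫ ^ 2)) :=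
  sum_max_variance_le_general d n m hm φ θ η hpos
end

section
/- Let A and B be symmetric positive definite d×d real matrices with A ⪯ B (that is, B − A is positive semidefinite). If B ⪯ 2A fails, i.e., there exists a vector v ∈ ℝ^d with vᵀBv > 2·vᵀAv, then det(B) ≥ 2·det(A). -/
/-!
Write `A = Sᴴ S` with `S` invertible and `B = Sᴴ C S`. Congruence by `S` preserves the Loewner
order in both directions, so `A ⪯ B` gives `1 ⪯ C` and `B ⋠ 2A` gives `C ⋠ 2`. Hence every
eigenvalue of `C` is at least `1` and one of them exceeds `2`, so `det C ≥ 2`, while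
`det B = det A · det C`.
-/

open Matrix
open scoped MatrixOrder

section StarRing

variable {R : Type*} [Semiring R] [StarRing R] {c : R}

theorem IsUnit.exists_eq_star_mul_mul (hc : IsUnit c) (b : R) : ∃ a, b = star c * a * c := by
  obtain ⟨u, rfl⟩ := hc
  refine ⟨star (↑u⁻¹ : R) * b * ↑u⁻¹, ?_⟩
  simp only [← mul_assoc, ← star_mul, Units.inv_mul, star_one, one_mul]
  simp [mul_assoc]

theorem IsUnit.star_left_conjugate_le_conjugate_iff [PartialOrder R] [StarOrderedRing R]
    (hc : IsUnit c) {a b : R} : star c * a * c ≤ star c * b * c ↔ a ≤ b := by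
  refine ⟨fun h => ?_, fun h => star_left_conjugate_le_conjugate h c⟩
  obtain ⟨u, rfl⟩ := hc
  have cancel (x : R) : star (↑u⁻¹ : R) * (star ↑u * x * ↑u) * ↑u⁻¹ = x := by
    simp only [← mul_assoc, ← star_mul, Units.mul_inv, star_one, one_mul]
    simp [mul_assoc]
  simpa only [cancel] using star_left_conjugate_le_conjugate h (↑u⁻¹ : R)

end StarRing

namespace Matrix

variable {𝕜 n : Type*} [RCLike 𝕜] [Fintype n]

theorem dotProduct_mulVec_le_of_le {A B : Matrix n n ℝ} (h : A ≤ B) (v : n → ℝ) :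
    v ⬝ᵥ A *ᵥ v ≤ v ⬝ᵥ B *ᵥ v := by
  simpa [sub_mulVec] using (le_iff.mp h).dotProduct_mulVec_nonneg v

variable [DecidableEq n] {C : Matrix n n 𝕜} {r : ℝ}

theorem IsHermitian.le_eigenvalues_of_algebraMap_le (hC : C.IsHermitian)
    (h : algebraMap ℝ _ r ≤ C) (i : n) : r ≤ hC.eigenvalues i :=
  (algebraMap_le_iff_le_spectrum hC.isSelfAdjoint).mp h _ (hC.eigenvalues_mem_spectrum_real i)

theorem IsHermitian.exists_lt_eigenvalues_of_not_le_algebraMap (hC : C.IsHermitian)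
    (h : ¬ C ≤ algebraMap ℝ _ r) : ∃ i, r < hC.eigenvalues i := by
  simpa [le_algebraMap_iff_spectrum_le hC.isSelfAdjoint, hC.spectrum_real_eq_range_eigenvalues]
    using h

theorem le_det_of_one_le_of_not_le_algebraMap {C : Matrix n n ℝ} (h1 : 1 ≤ C)
    (hr : ¬ C ≤ algebraMap ℝ _ r) : r ≤ C.det := by
  have hC : C.IsHermitian := (zero_le_one.trans h1).posSemidef.isHermitian
  have one_le : ∀ i, 1 ≤ hC.eigenvalues i :=
    hC.le_eigenvalues_of_algebraMap_le (by simpa using h1)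
  obtain ⟨j, hj⟩ := hC.exists_lt_eigenvalues_of_not_le_algebraMap hr
  calc r ≤ hC.eigenvalues j := hj.le
    _ = ∏ i ∈ {j}, hC.eigenvalues i := (Finset.prod_singleton _ _).symm
    _ ≤ ∏ i, hC.eigenvalues i := Finset.prod_le_prod_of_subset_of_one_le (Finset.subset_univ _)
        (fun i _ => zero_le_one.trans (one_le i)) (fun i _ _ => one_le i)
    _ = C.det := by simpa using hC.det_eq_prod_eigenvalues.symm

end Matrix

theorem det_double_of_not_le_general (d : ℕ) (A B : Matrix (Fin d) (Fin d) ℝ)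
    (hA : A.PosDef) (hAB : (B - A).PosSemidef)
    (hfail : ∃ v : Fin d → ℝ, 2 * (v ⬝ᵥ A.mulVec v) < v ⬝ᵥ B.mulVec v) :
    2 * A.det ≤ B.det := by
  obtain ⟨v, hv⟩ := hfail
  have hdetA : 0 ≤ A.det := hA.det_pos.le
  obtain ⟨S, hS, rfl⟩ :=
    CStarAlgebra.isStrictlyPositive_iff_eq_star_mul_self.mp hA.isStrictlyPositive
  obtain ⟨C, rfl⟩ := hS.exists_eq_star_mul_mul B
  have one_le : 1 ≤ C := hS.star_left_conjugate_le_conjugate_iff.mp (by simpa using le_iff.mpr hAB)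
  have not_le_two : ¬ C ≤ algebraMap ℝ _ 2 := fun h => by
    have two : star S * algebraMap ℝ _ 2 * S = (2 : ℝ) • (star S * S) := by
      rw [Algebra.algebraMap_eq_smul_one, mul_smul_comm, mul_one, smul_mul_assoc]
    have := dotProduct_mulVec_le_of_le (star_left_conjugate_le_conjugate h S) v
    rw [two, smul_mulVec, dotProduct_smul, smul_eq_mul] at this
    linarith
  calc 2 * (star S * S).det
      ≤ C.det * (star S * S).det := by
        gcongr; exact le_det_of_one_le_of_not_le_algebraMap one_le not_le_two
    _ = (star S * C * S).det := by simp only [det_mul]; ring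

/-- Determinant-doubling step: if `A ⪯ B` are positive definite and `B ⪯ 2A` fails
(witnessed by a vector `v` with `vᵀBv > 2 vᵀAv`), then `det B ≥ 2 det A`. -/
theorem det_double_of_not_le (d : ℕ) (A B : Matrix (Fin d) (Fin d) ℝ)
    (hA : A.PosDef) (hB : B.PosDef) (hAB : (B - A).PosSemidef)
    (hfail : ∃ v : Fin d → ℝ, 2 * (v ⬝ᵥ A.mulVec v) < v ⬝ᵥ B.mulVec v) :
    2 * A.det ≤ B.det :=
  det_double_of_not_le_general d A B hA hAB hfail
end

section
/- Let d ≥ 1, let φ_1, …, φ_n be vectors in ℝ^d with ‖φ_i‖₂ ≤ L for all i, let λ > 0, and define Λ_0 = λ·I and Λ_i = λ·I + Σ_{i'=1}^{i} φ_{i'}·φ_{i'}ᵀ for 1 ≤ i ≤ n. Then for any increasing sequence of indices 0 = i_1 < i_2 < … < i_k = n, Σ_{j=1}^{k−1} min{ Σ_{i = i_j + 1}^{i_{j+1}} φ_iᵀ Λ_{i_j}^{−1} φ_i , 1 } ≤ 6·d·log₂(1 + n·L²/λ). -/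
/-!
Write `Λ_m = λI + Σ_{i ≤ m} φ_i φ_iᵀ`. For a positive definite `A` and a positive semidefinite `B`,
`det (A + B) = det A · det (1 + √B A⁻¹ √B)`, and `det (1 + M) ≥ 1 + tr M` for `M ⪰ 0`; with
`A = Λ_{i_j}` and `B` the sum of the rank-one updates of block `j`, the potential `S_j` of the block
equals `tr (A⁻¹ B)`, so `log (1 + S_j) ≤ log det Λ_{i_{j+1}} - log det Λ_{i_j}`. Since
`min S 1 ≤ 2 log (1 + S)`, the sum over blocks telescopes to `2 (log det Λ_n - log det Λ_0)`, and
`λI ⪯ Λ_n ⪯ (λ + n L²) I` bounds this by `2 d log (1 + n L² / λ)`.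
-/

open Matrix
open scoped MatrixOrder

theorem Finset.one_add_sum_le_prod_one_add {ι R : Type*} [CommSemiring R] [PartialOrder R]
    [IsOrderedRing R] (s : Finset ι) {f : ι → R} (hf : ∀ i ∈ s, 0 ≤ f i) :
    1 + ∑ i ∈ s, f i ≤ ∏ i ∈ s, (1 + f i) := by
  induction s using Finset.cons_induction with
  | empty => simp
  | cons a s ha ih =>
    rw [Finset.sum_cons, Finset.prod_cons]
    have hfa := hf a (Finset.mem_cons_self a s)
    have hs := Finset.sum_nonneg fun i hi => hf i (Finset.mem_cons_of_mem hi)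
    calc 1 + (f a + ∑ i ∈ s, f i) ≤ 1 + (f a + ∑ i ∈ s, f i) + f a * ∑ i ∈ s, f i :=
          le_add_of_nonneg_right (mul_nonneg hfa hs)
      _ = (1 + f a) * (1 + ∑ i ∈ s, f i) := by ring
      _ ≤ (1 + f a) * ∏ i ∈ s, (1 + f i) :=
          mul_le_mul_of_nonneg_left (ih fun i hi => hf i (Finset.mem_cons_of_mem hi))
            (add_nonneg zero_le_one hfa)

theorem Fin.sum_univ_succ_sub_castSucc {M : Type*} [AddCommGroup M] :
    ∀ {k : ℕ} (f : Fin (k + 1) → M), ∑ j : Fin k, (f j.succ - f j.castSucc) = f (Fin.last k) - f 0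
  | 0, f => by simp
  | k + 1, f => by
    have ih := Fin.sum_univ_succ_sub_castSucc (f ∘ Fin.castSucc)
    simp only [Function.comp_apply, ← Fin.succ_castSucc] at ih
    rw [Fin.sum_univ_castSucc, ih, Fin.succ_last, Fin.castSucc_zero]
    abel

theorem Real.min_le_two_mul_log_one_add {S : ℝ} (hS : 0 ≤ S) : min S 1 ≤ 2 * Real.log (1 + S) := by
  rcases le_or_gt S 1 with hS1 | hS1
  · have hlog := Real.one_sub_inv_le_log_of_pos (by linarith : 0 < 1 + S)
    have : S / 2 ≤ 1 - (1 + S)⁻¹ := by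
      rw [div_le_iff₀ two_pos]
      field_simp
      nlinarith
    rw [min_eq_left hS1]
    linarith
  · have := Real.log_le_log (by norm_num) (by linarith : (2 : ℝ) ≤ 1 + S)
    rw [min_eq_right hS1.le]
    linarith [Real.log_two_gt_d9]

theorem Real.log_le_logb_two {x : ℝ} (hx : 1 ≤ x) : Real.log x ≤ Real.logb 2 x := by
  rw [Real.logb, le_div_iff₀ (Real.log_pos one_lt_two)]
  nlinarith [Real.log_nonneg hx, Real.log_two_lt_d9]

namespace Matrix

variable {n : Type*} [Fintype n]

theorem trace_mul_sum_vecMulVec {R ι : Type*} [CommSemiring R] (A : Matrix n n R) (s : Finset ι)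
    (v : ι → n → R) : (A * ∑ i ∈ s, vecMulVec (v i) (v i)).trace = ∑ i ∈ s, v i ⬝ᵥ A *ᵥ v i := by
  simp only [Finset.mul_sum, trace_sum, mul_vecMulVec, trace_vecMulVec, dotProduct_comm]

variable [DecidableEq n]

theorem IsHermitian.det_one_add {N : Matrix n n ℝ} (hN : N.IsHermitian) :
    (1 + N).det = ∏ i, (1 + hN.eigenvalues i) := by
  conv_lhs => rw [hN.spectral_theorem,
    ← map_one (Unitary.conjStarAlgAut ℝ _ hN.eigenvectorUnitary), ← map_add]
  rw [Unitary.conjStarAlgAut_apply, det_mul, det_mul, mul_comm, ← mul_assoc, ← det_mul]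
  simp [← diagonal_one, diagonal_add]

theorem PosSemidef.one_add_trace_le_det_one_add {N : Matrix n n ℝ} (hN : N.PosSemidef) :
    1 + N.trace ≤ (1 + N).det := by
  rw [hN.1.det_one_add, hN.1.trace_eq_sum_eigenvalues]
  exact Finset.one_add_sum_le_prod_one_add _ fun i _ => hN.eigenvalues_nonneg i

theorem PosSemidef.sqrt_mul_mul_sqrt {A : Matrix n n ℝ} (hA : A.PosSemidef) (B : Matrix n n ℝ) :
    (CFC.sqrt B * A * CFC.sqrt B).PosSemidef := by
  have h := hA.conjTranspose_mul_mul_same (CFC.sqrt B)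
  rwa [(CFC.sqrt_nonneg B).posSemidef.1.eq] at h

theorem PosSemidef.trace_mul_nonneg {A B : Matrix n n ℝ} (hA : A.PosSemidef) (hB : B.PosSemidef) :
    0 ≤ (A * B).trace := by
  rw [← CFC.sqrt_mul_sqrt_self B hB.nonneg, ← Matrix.mul_assoc, trace_mul_cycle]
  exact (hA.sqrt_mul_mul_sqrt B).trace_nonneg

theorem PosDef.det_mul_one_add_trace_le_det_add {A B : Matrix n n ℝ} (hA : A.PosDef)
    (hB : B.PosSemidef) : A.det * (1 + (A⁻¹ * B).trace) ≤ (A + B).det := by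
  have htrace : (CFC.sqrt B * A⁻¹ * CFC.sqrt B).trace = (A⁻¹ * B).trace := by
    rw [Matrix.mul_assoc, trace_mul_comm, Matrix.mul_assoc, CFC.sqrt_mul_sqrt_self B hB.nonneg]
  calc A.det * (1 + (A⁻¹ * B).trace)
      ≤ A.det * (1 + CFC.sqrt B * A⁻¹ * CFC.sqrt B).det := by
        rw [← htrace]
        exact mul_le_mul_of_nonneg_left
          (hA.inv.posSemidef.sqrt_mul_mul_sqrt B).one_add_trace_le_det_one_add hA.det_pos.le
    _ = (A + B).det := by
        rw [← det_add_mul _ _ hA.det_pos.ne'.isUnit, CFC.sqrt_mul_sqrt_self B hB.nonneg]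

theorem PosDef.det_le_det_of_le {A B : Matrix n n ℝ} (hA : A.PosDef) (hAB : A ≤ B) :
    A.det ≤ B.det := by
  have hBA : (B - A).PosSemidef := hAB
  calc A.det ≤ A.det * (1 + (A⁻¹ * (B - A)).trace) :=
        le_mul_of_one_le_right hA.det_pos.le
          (le_add_of_nonneg_right (hA.inv.posSemidef.trace_mul_nonneg hBA))
    _ ≤ (A + (B - A)).det := hA.det_mul_one_add_trace_le_det_add hBA
    _ = B.det := by rw [add_sub_cancel]

theorem PosDef.min_sum_dotProduct_inv_mulVec_le {ι : Type*} {A : Matrix n n ℝ} (hA : A.PosDef)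
    (s : Finset ι) (v : ι → n → ℝ) :
    min (∑ i ∈ s, v i ⬝ᵥ A⁻¹ *ᵥ v i) 1
      ≤ 2 * (Real.log (A + ∑ i ∈ s, vecMulVec (v i) (v i)).det - Real.log A.det) := by
  set B := ∑ i ∈ s, vecMulVec (v i) (v i)
  have hB : B.PosSemidef := posSemidef_sum s fun i _ => posSemidef_vecMulVec_self_star (v i)
  have hS : ∑ i ∈ s, v i ⬝ᵥ A⁻¹ *ᵥ v i = (A⁻¹ * B).trace := (trace_mul_sum_vecMulVec _ s v).symm
  have hS0 : 0 ≤ (A⁻¹ * B).trace := hA.inv.posSemidef.trace_mul_nonneg hB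
  have hlog : Real.log (1 + (A⁻¹ * B).trace) ≤ Real.log (A + B).det - Real.log A.det := by
    rw [← Real.log_div (hA.add_posSemidef hB).det_pos.ne' hA.det_pos.ne']
    refine Real.log_le_log (by linarith) ?_
    rw [le_div_iff₀ hA.det_pos, mul_comm]
    exact hA.det_mul_one_add_trace_le_det_add hB
  rw [hS]
  linarith [Real.min_le_two_mul_log_one_add hS0]

theorem vecMulVec_self_le_norm_sq_smul_one (v : EuclideanSpace ℝ n) :
    vecMulVec (v : n → ℝ) v ≤ ‖v‖ ^ 2 • (1 : Matrix n n ℝ) := by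
  refine PosSemidef.of_dotProduct_mulVec_nonneg
    ((isHermitian_one.smul (IsSelfAdjoint.all _)).sub (posSemidef_vecMulVec_self_star _).1)
    fun x => ?_
  have hCS : ((v : n → ℝ) ⬝ᵥ x) ^ 2 ≤ ‖v‖ ^ 2 * (x ⬝ᵥ x) := by
    rw [EuclideanSpace.real_norm_sq_eq]
    simpa [dotProduct, pow_two] using Finset.sum_mul_sq_le_sq_mul_sq Finset.univ (fun i => v i) x
  simp only [star_trivial, sub_mulVec, smul_mulVec, one_mulVec, vecMulVec_mulVec, dotProduct_sub,
    dotProduct_smul, op_smul_eq_smul, smul_eq_mul, dotProduct_comm x (v : n → ℝ)]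
  nlinarith

end Matrix

noncomputable def designMatrix {n : Type*} [Fintype n] [DecidableEq n] (lam : ℝ)
    (φ : ℕ → EuclideanSpace ℝ n) (m : ℕ) : Matrix n n ℝ :=
  lam • 1 + ∑ i ∈ Finset.Icc 1 m, vecMulVec (φ i : n → ℝ) (φ i)

namespace designMatrix

variable {n : Type*} [Fintype n] [DecidableEq n] {lam : ℝ} {φ : ℕ → EuclideanSpace ℝ n}

theorem posDef (hlam : 0 < lam) (m : ℕ) : (designMatrix lam φ m).PosDef :=
  (PosDef.one.smul hlam).add_posSemidef
    (posSemidef_sum _ fun i _ => posSemidef_vecMulVec_self_star (φ i : n → ℝ))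

theorem eq_add_sum_Icc {a b : ℕ} (hab : a ≤ b) :
    designMatrix lam φ b
      = designMatrix lam φ a + ∑ i ∈ Finset.Icc (a + 1) b, vecMulVec (φ i : n → ℝ) (φ i) := by
  have hIcc (c : ℕ) : Finset.Icc 1 c = Finset.Ioc 0 c := Finset.Icc_add_one_left_eq_Ioc 0 c
  rw [designMatrix, designMatrix, add_assoc, hIcc, hIcc, Finset.Icc_add_one_left_eq_Ioc,
    Finset.sum_Ioc_consecutive _ (Nat.zero_le a) hab]

theorem le_smul_one {L : ℝ} {m : ℕ} (hφ : ∀ i ∈ Finset.Icc 1 m, ‖φ i‖ ≤ L) :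
    designMatrix lam φ m ≤ (lam + m * L ^ 2) • 1 := by
  rw [designMatrix, add_smul]
  gcongr
  calc ∑ i ∈ Finset.Icc 1 m, vecMulVec (φ i : n → ℝ) (φ i)
      ≤ ∑ _i ∈ Finset.Icc 1 m, L ^ 2 • (1 : Matrix n n ℝ) :=
        Finset.sum_le_sum fun i hi => (vecMulVec_self_le_norm_sq_smul_one _).trans <|
          smul_le_smul_of_nonneg_right (pow_le_pow_left₀ (norm_nonneg _) (hφ i hi) 2)
            PosSemidef.one.nonneg
    _ = (m * L ^ 2) • 1 := by
        rw [Finset.sum_const, Nat.card_Icc, add_tsub_cancel_right, ← Nat.cast_smul_eq_nsmul ℝ,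
          smul_smul]

theorem log_det_sub_log_det_zero_le (hlam : 0 < lam) {L : ℝ} {m : ℕ}
    (hφ : ∀ i ∈ Finset.Icc 1 m, ‖φ i‖ ≤ L) :
    Real.log (designMatrix lam φ m).det - Real.log (designMatrix lam φ 0).det
      ≤ Fintype.card n * Real.log (1 + m * L ^ 2 / lam) := by
  have hpos : 0 < lam + m * L ^ 2 := by positivity
  have hdet : (designMatrix lam φ m).det ≤ (lam + m * L ^ 2) ^ Fintype.card n := by
    simpa [det_smul] using (posDef hlam m).det_le_det_of_le (le_smul_one hφ)
  have hdet0 : (designMatrix lam φ 0).det = lam ^ Fintype.card n := by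
    simp [designMatrix]
  have hratio : 1 + m * L ^ 2 / lam = (lam + m * L ^ 2) / lam := by field_simp
  rw [hdet0, Real.log_pow, hratio, Real.log_div hpos.ne' hlam.ne', mul_sub, sub_le_sub_iff_right,
    ← Real.log_pow]
  exact Real.log_le_log (posDef hlam m).det_pos hdet

end designMatrix

theorem blockwise_elliptical_potential_general (d n : ℕ) (L lam : ℝ) (hlam : 0 < lam)
    (φ : ℕ → EuclideanSpace ℝ (Fin d)) (hφ : ∀ i ∈ Finset.Icc 1 n, ‖φ i‖ ≤ L)
    (Λ : ℕ → Matrix (Fin d) (Fin d) ℝ)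
    (hΛ : ∀ i, Λ i = lam • (1 : Matrix (Fin d) (Fin d) ℝ)
        + ∑ i' ∈ Finset.Icc 1 i, Matrix.vecMulVec (φ i') (φ i'))
    (k : ℕ) (idx : Fin (k + 1) → ℕ) (hmono : StrictMono idx)
    (h0 : idx 0 = 0) (hlast : idx (Fin.last k) = n) :
    ∑ j : Fin k, min (∑ i ∈ Finset.Icc (idx j.castSucc + 1) (idx j.succ),
        (φ i : Fin d → ℝ) ⬝ᵥ (Λ (idx j.castSucc))⁻¹.mulVec (φ i)) 1
      ≤ 6 * d * Real.logb 2 (1 + n * L ^ 2 / lam) := by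
  obtain rfl : Λ = designMatrix lam φ := funext hΛ
  set f : Fin (k + 1) → ℝ := fun j => Real.log (designMatrix lam φ (idx j)).det
  have hblock (j : Fin k) : min (∑ i ∈ Finset.Icc (idx j.castSucc + 1) (idx j.succ),
      (φ i : Fin d → ℝ) ⬝ᵥ (designMatrix lam φ (idx j.castSucc))⁻¹.mulVec (φ i)) 1
      ≤ 2 * (f j.succ - f j.castSucc) := by
    simp only [f, designMatrix.eq_add_sum_Icc (hmono (Fin.castSucc_lt_succ (i := j))).le]
    exact (designMatrix.posDef hlam _).min_sum_dotProduct_inv_mulVec_le _ _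
  have hx : 1 ≤ 1 + n * L ^ 2 / lam := le_add_of_nonneg_right (by positivity)
  have hlog := Real.log_le_logb_two hx
  have hlog0 := Real.log_nonneg hx
  calc _ ≤ ∑ j : Fin k, 2 * (f j.succ - f j.castSucc) := Finset.sum_le_sum fun j _ => hblock j
    _ = 2 * (f (Fin.last k) - f 0) := by rw [← Finset.mul_sum, Fin.sum_univ_succ_sub_castSucc]
    _ ≤ 2 * (d * Real.log (1 + n * L ^ 2 / lam)) := by
        simpa [f, hlast, h0] using designMatrix.log_det_sub_log_det_zero_le hlam hφ
    _ ≤ 6 * d * Real.logb 2 (1 + n * L ^ 2 / lam) := by nlinarith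

/-- Lemma A.6 (blockwise elliptical potential lemma): with `Λ_i = λI + Σ_{i'≤i} φ_{i'}φ_{i'}ᵀ`,
`‖φ_i‖₂ ≤ L`, and any increasing index sequence `0 = i_1 < … < i_k = n`,
`Σ_j min{Σ_{i=i_j+1}^{i_{j+1}} φ_iᵀ Λ_{i_j}⁻¹ φ_i, 1} ≤ 6 d log₂(1 + nL²/λ)`. -/
theorem blockwise_elliptical_potential (d n : ℕ) (hd : 1 ≤ d) (L lam : ℝ) (hlam : 0 < lam)
    (φ : ℕ → EuclideanSpace ℝ (Fin d)) (hφ : ∀ i ∈ Finset.Icc 1 n, ‖φ i‖ ≤ L)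
    (Λ : ℕ → Matrix (Fin d) (Fin d) ℝ)
    (hΛ : ∀ i, Λ i = lam • (1 : Matrix (Fin d) (Fin d) ℝ)
        + ∑ i' ∈ Finset.Icc 1 i, Matrix.vecMulVec (φ i') (φ i'))
    (k : ℕ) (idx : Fin (k + 1) → ℕ) (hmono : StrictMono idx)
    (h0 : idx 0 = 0) (hlast : idx (Fin.last k) = n) :
    ∑ j : Fin k, min (∑ i ∈ Finset.Icc (idx j.castSucc + 1) (idx j.succ),
        (φ i : Fin d → ℝ) ⬝ᵥ (Λ (idx j.castSucc))⁻¹.mulVec (φ i)) 1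
      ≤ 6 * d * Real.logb 2 (1 + n * L ^ 2 / lam) :=
  blockwise_elliptical_potential_general d n L lam hlam φ hφ Λ hΛ k idx hmono h0 hlast
end

section
/- Let d ≥ 1, let φ_1, …, φ_n be vectors in ℝ^d with ‖φ_i‖₂ ≤ L for all i, let λ > 0, and define Λ_0 = λ·I and Λ_i = λ·I + Σ_{i'=1}^{i} φ_{i'}·φ_{i'}ᵀ for 1 ≤ i ≤ n. Then Σ_{i=1}^{n} φ_iᵀ Λ_i^{−1} φ_i ≤ d·ln(1 + n·L²/λ). -/
/-! The matrix determinant lemma gives `det Λ_{i-1} / det Λ_i = 1 - φ_iᵀ Λ_i⁻¹ φ_i`, so by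
`log x ≤ x - 1` each term is at most `log det Λ_i - log det Λ_{i-1}` and the sum telescopes to
`log (det Λ_n / det Λ_0)`. Here `det Λ_0 = λ^d`, while every eigenvalue of `Λ_n` is a Rayleigh
quotient `λ + Σ (φ_iᵀ v)² ≤ λ + nL²`, so `det Λ_n ≤ (λ + nL²)^d`. -/

open Matrix

theorem EuclideanSpace.dotProduct_self_eq_norm_sq {m : Type*} [Fintype m]
    (x : EuclideanSpace ℝ m) : (x : m → ℝ) ⬝ᵥ x = ‖x‖ ^ 2 := by
  rw [← real_inner_self_eq_norm_sq, EuclideanSpace.inner_eq_star_dotProduct, star_trivial]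

namespace Matrix

variable {m : Type*} [Fintype m]

theorem sq_dotProduct_le {R : Type*} [CommRing R] [LinearOrder R] [IsStrictOrderedRing R]
    (u v : m → R) : (u ⬝ᵥ v) ^ 2 ≤ (u ⬝ᵥ u) * (v ⬝ᵥ v) := by
  simpa only [dotProduct, sq] using Finset.sum_mul_sq_le_sq_mul_sq Finset.univ u v

theorem dotProduct_vecMulVec_self_mulVec {R : Type*} [CommSemiring R] (u x : m → R) :
    x ⬝ᵥ vecMulVec u u *ᵥ x = (u ⬝ᵥ x) ^ 2 := by
  rw [dotProduct_mulVec, vecMul_vecMulVec, smul_dotProduct, smul_eq_mul, dotProduct_comm, sq]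

theorem posSemidef_vecMulVec_self (u : m → ℝ) : (vecMulVec u u).PosSemidef := by
  simpa using posSemidef_vecMulVec_self_star u

theorem posDef_of_add_vecMulVec {Λ : ℕ → Matrix m m ℝ} {φ : ℕ → m → ℝ} (h0 : (Λ 0).PosDef)
    (hsucc : ∀ k, Λ (k + 1) = Λ k + vecMulVec (φ (k + 1)) (φ (k + 1))) (k : ℕ) :
    (Λ k).PosDef := by
  induction k with
  | zero => exact h0
  | succ k ih => rw [hsucc]; exact ih.add_posSemidef (posSemidef_vecMulVec_self _)

variable [DecidableEq m]

theorem det_add_vecMulVec {R : Type*} [CommRing R] {A : Matrix m m R} (hA : IsUnit A.det)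
    (u v : m → R) : (A + vecMulVec u v).det = A.det * (1 + v ⬝ᵥ A⁻¹ *ᵥ u) := by
  rw [vecMulVec_eq Unit, det_add_replicateCol_mul_replicateRow hA, det_unique (1 + _),
    Matrix.add_apply, one_apply_eq, Matrix.mul_assoc, ← replicateCol_mulVec,
    replicateRow_mul_replicateCol_apply]

theorem dotProduct_inv_mulVec_le_log_det_sub {A : Matrix m m ℝ} (u : m → ℝ)
    (hA : 0 < A.det) (hAu : 0 < (A + vecMulVec u u).det) :
    u ⬝ᵥ (A + vecMulVec u u)⁻¹ *ᵥ u ≤ Real.log (A + vecMulVec u u).det - Real.log A.det := by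
  set B := A + vecMulVec u u
  have hratio : A.det / B.det = 1 - u ⬝ᵥ B⁻¹ *ᵥ u := by
    rw [show A = B + vecMulVec (-u) u by simp [B], det_add_vecMulVec hAu.ne'.isUnit,
      mulVec_neg, dotProduct_neg, mul_div_cancel_left₀ _ hAu.ne', sub_eq_add_neg]
  have hlog := Real.log_le_sub_one_of_pos (div_pos hA hAu)
  rw [Real.log_div hA.ne' hAu.ne', hratio] at hlog
  linarith

theorem sum_dotProduct_inv_mulVec_le_log_det_sub {Λ : ℕ → Matrix m m ℝ} {φ : ℕ → m → ℝ}
    (h0 : (Λ 0).PosDef) (hsucc : ∀ k, Λ (k + 1) = Λ k + vecMulVec (φ (k + 1)) (φ (k + 1)))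
    (n : ℕ) :
    ∑ i ∈ Finset.Icc 1 n, φ i ⬝ᵥ (Λ i)⁻¹ *ᵥ φ i ≤ Real.log (Λ n).det - Real.log (Λ 0).det := by
  have hdet k := (posDef_of_add_vecMulVec h0 hsucc k).det_pos
  induction n with
  | zero => simp
  | succ k ih =>
    have hstep :=
      dotProduct_inv_mulVec_le_log_det_sub (φ (k + 1)) (hdet k) (hsucc k ▸ hdet (k + 1))
    rw [← hsucc] at hstep
    rw [Finset.sum_Icc_succ_top (by omega)]
    linarith

theorem PosSemidef.det_le_pow {A : Matrix m m ℝ} (hA : A.PosSemidef) {c : ℝ}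
    (hc : ∀ x, x ⬝ᵥ A *ᵥ x ≤ c * (x ⬝ᵥ x)) : A.det ≤ c ^ Fintype.card m := by
  rw [hA.isHermitian.det_eq_prod_eigenvalues, ← Finset.card_univ, ← Finset.prod_const]
  refine Finset.prod_le_prod (fun i _ ↦ hA.eigenvalues_nonneg i) fun i _ ↦ ?_
  have hunit : (hA.1.eigenvectorBasis i : m → ℝ) ⬝ᵥ hA.1.eigenvectorBasis i = 1 := by
    rw [EuclideanSpace.dotProduct_self_eq_norm_sq, hA.1.eigenvectorBasis.orthonormal.1 i, one_pow]
  simpa [hA.1.eigenvalues_eq, hunit] using hc (hA.1.eigenvectorBasis i)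

theorem dotProduct_smul_one_add_sum_vecMulVec_mulVec_le {ι : Type*} (s : Finset ι) (lam C : ℝ)
    {v : ι → m → ℝ} (hv : ∀ i ∈ s, v i ⬝ᵥ v i ≤ C) (x : m → ℝ) :
    x ⬝ᵥ (lam • 1 + ∑ i ∈ s, vecMulVec (v i) (v i)) *ᵥ x ≤ (lam + s.card * C) * (x ⬝ᵥ x) := by
  have hterm : ∀ i ∈ s, x ⬝ᵥ vecMulVec (v i) (v i) *ᵥ x ≤ C * (x ⬝ᵥ x) := fun i hi ↦ by
    rw [dotProduct_vecMulVec_self_mulVec]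
    exact (sq_dotProduct_le _ _).trans <|
      mul_le_mul_of_nonneg_right (hv i hi) (by simpa using dotProduct_self_star_nonneg x)
  calc x ⬝ᵥ (lam • 1 + ∑ i ∈ s, vecMulVec (v i) (v i)) *ᵥ x
      = lam * (x ⬝ᵥ x) + ∑ i ∈ s, x ⬝ᵥ vecMulVec (v i) (v i) *ᵥ x := by
        rw [add_mulVec, sum_mulVec, dotProduct_add, dotProduct_sum, smul_mulVec, one_mulVec,
          dotProduct_smul, smul_eq_mul]
    _ ≤ lam * (x ⬝ᵥ x) + ∑ i ∈ s, C * (x ⬝ᵥ x) := by gcongr with i hi; exact hterm i hi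
    _ = (lam + s.card * C) * (x ⬝ᵥ x) := by rw [Finset.sum_const, nsmul_eq_mul]; ring

end Matrix

theorem elliptical_potential_sum_general (d n : ℕ) (L lam : ℝ) (hlam : 0 < lam)
    (φ : ℕ → EuclideanSpace ℝ (Fin d)) (hφ : ∀ i ∈ Finset.Icc 1 n, ‖φ i‖ ≤ L)
    (Λ : ℕ → Matrix (Fin d) (Fin d) ℝ)
    (hΛ : ∀ i, Λ i = lam • (1 : Matrix (Fin d) (Fin d) ℝ)
        + ∑ i' ∈ Finset.Icc 1 i, Matrix.vecMulVec (φ i') (φ i')) :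
    ∑ i ∈ Finset.Icc 1 n, (φ i : Fin d → ℝ) ⬝ᵥ (Λ i)⁻¹.mulVec (φ i)
      ≤ d * Real.log (1 + n * L ^ 2 / lam) := by
  have hΛ0 : Λ 0 = lam • 1 := by simp [hΛ]
  have h0 : (Λ 0).PosDef := hΛ0 ▸ PosDef.one.smul hlam
  -- forgetting the `EuclideanSpace` wrapper lets the lemmas above unify with `φ`
  set ψ : ℕ → Fin d → ℝ := fun i ↦ φ i
  have hsucc k : Λ (k + 1) = Λ k + vecMulVec (ψ (k + 1)) (ψ (k + 1)) := by
    rw [hΛ, hΛ, Finset.sum_Icc_succ_top (by omega), add_assoc]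
  have hdet0 : (Λ 0).det = lam ^ d := by simp [hΛ0]
  have hdetn : (Λ n).det ≤ (lam + n * L ^ 2) ^ d := by
    have hφsq : ∀ i ∈ Finset.Icc 1 n, (φ i : Fin d → ℝ) ⬝ᵥ φ i ≤ L ^ 2 := fun i hi ↦ by
      rw [EuclideanSpace.dotProduct_self_eq_norm_sq]
      exact pow_le_pow_left₀ (norm_nonneg _) (hφ i hi) 2
    simpa using (posDef_of_add_vecMulVec h0 hsucc n).posSemidef.det_le_pow fun x ↦ by
      simpa [← hΛ] using dotProduct_smul_one_add_sum_vecMulVec_mulVec_le _ lam _ hφsq x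
  have hlogn := Real.log_le_log (posDef_of_add_vecMulVec h0 hsucc n).det_pos hdetn
  calc ∑ i ∈ Finset.Icc 1 n, (φ i : Fin d → ℝ) ⬝ᵥ (Λ i)⁻¹.mulVec (φ i)
      ≤ Real.log (Λ n).det - Real.log (Λ 0).det :=
        sum_dotProduct_inv_mulVec_le_log_det_sub h0 hsucc n
    _ ≤ d * Real.log (lam + n * L ^ 2) - d * Real.log lam := by
        rw [hdet0, Real.log_pow]; rw [Real.log_pow] at hlogn; linarith
    _ = d * Real.log (1 + n * L ^ 2 / lam) := by
        rw [← mul_sub, ← Real.log_div (by positivity) hlam.ne', add_div, div_self hlam.ne']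

/-- Elliptical potential sum bound: with `Λ_i = λI + Σ_{i'≤i} φ_{i'}φ_{i'}ᵀ` and `‖φ_i‖₂ ≤ L`,
`Σ_{i=1}^n φ_iᵀ Λ_i⁻¹ φ_i ≤ d ln(1 + nL²/λ)`. -/
theorem elliptical_potential_sum (d n : ℕ) (hd : 1 ≤ d) (L lam : ℝ) (hlam : 0 < lam)
    (φ : ℕ → EuclideanSpace ℝ (Fin d)) (hφ : ∀ i ∈ Finset.Icc 1 n, ‖φ i‖ ≤ L)
    (Λ : ℕ → Matrix (Fin d) (Fin d) ℝ)
    (hΛ : ∀ i, Λ i = lam • (1 : Matrix (Fin d) (Fin d) ℝ)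
        + ∑ i' ∈ Finset.Icc 1 i, Matrix.vecMulVec (φ i') (φ i')) :
    ∑ i ∈ Finset.Icc 1 n, (φ i : Fin d → ℝ) ⬝ᵥ (Λ i)⁻¹.mulVec (φ i)
      ≤ d * Real.log (1 + n * L ^ 2 / lam) :=
  elliptical_potential_sum_general d n L lam hlam φ hφ Λ hΛ
end
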